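/- For every automorphism f of M there exists γ* < ω₁ such that f restricted to A_α is the identity for all α ∈ [γ*, ω₁). -/

import Mathlib

/-!
An automorphism `f` commutes with the translations `F_y` and preserves `E₁`, so it maps each `A_α`
onto some `A_π(α)` by a translation, where `π` is an order automorphism of `ω₁`, hence the
identity: `f (α, g) = (α, g + ν α)`. If `n ∈ supp ν(α)` for some `α < δ`, then by `R` the image of
the sequence that is constantly `G⁰ₙ` below `δ` takes at `α` the value `G⁰ₙ + ν α ≠ G⁰ₘ` for every
`m`; as members of `B_δ'` differ from some `G⁰ₘ` only finitely often, `{α < δ : n ∈ supp ν(α)}`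
is finite for every `δ < ω₁`. Then `{α < ω₁ : n ∈ supp ν(α)}` is finite for each `n`, and `ν`
vanishes above the countable supremum of their union.
-/
noncomputable section
open Set

/-- `G` is the vector space over `ℤ/2ℤ` with basis indexed by `ℕ`. -/
abbrev G : Type := ℕ →₀ ZMod 2

/-- The basis element `xₙ`. -/
def xg (n : ℕ) : G := Finsupp.single n 1

/-- `G⁰ₙ`: the subspace generated by the `x_k` for `k ≠ n`. -/
def G0 (n : ℕ) : Set G :=
  (Submodule.span (ZMod 2) {y : G | ∃ k : ℕ, k ≠ n ∧ y = xg k} : Submodule (ZMod 2) G)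

/-- `G¹ₙ = xₙ + G⁰ₙ`, the nontrivial coset. -/
def G1 (n : ℕ) : Set G := (fun z => xg n + z) '' G0 n

/-- The family `𝒢 = {Gˡₙ : n < ω, l ∈ {0,1}}`. -/
def Gfam : Set (Set G) := {S | ∃ n : ℕ, S = G0 n ∨ S = G1 n}

/-- The first uncountable ordinal. -/
def omega1 : Ordinal := (Cardinal.aleph 1).ord

/-- The universe of the structure `M`: elements of the parts `A_α = {α} × G`
and of the parts `B_α ⊆ {η : α → 𝒢}` (sequences are padded by `∅` beyond `α`). -/
inductive MU : Type 1 where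
  | a : Ordinal → G → MU
  | b : Ordinal → (Ordinal → Set G) → MU

/-- The condition for `η` (as a total function, padded by `∅`) to code a member of `B_α`:
its values below `α` are in `𝒢` and for some `n` it equals `G⁰ₙ` with finitely many
exceptions. -/
def okB (α : Ordinal) (η : Ordinal → Set G) : Prop :=
  (∀ β, β < α → η β ∈ Gfam) ∧ (∀ β, ¬ β < α → η β = ∅) ∧
    ∃ n : ℕ, {β : Ordinal | β < α ∧ η β ≠ G0 n}.Finite

/-- The universe of `M_{<γ}`, i.e. `∪ {A_β ∪ B_β : β < γ}`. -/
def MUuniv (γ : Ordinal) : Set MU :=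
  {u | match u with
       | .a α _ => α < γ
       | .b α η => α < γ ∧ okB α η}

/-- `u` belongs to the `A`-part (the predicate `P₁`; `P₂` is its negation). -/
def isA : MU → Prop
  | .a _ _ => True
  | .b _ _ => False

/-- The index `α` of the part `A_α` or `B_α` containing the element. -/
def idx : MU → Ordinal
  | .a α _ => α
  | .b α _ => α

/-- The relation `E₁`. -/
def E1 (u v : MU) : Prop := isA u ∧ isA v ∧ idx u ≤ idx v

/-- The relation `E₂`. -/
def E2 (u v : MU) : Prop := ¬ isA u ∧ ¬ isA v ∧ idx u ≤ idx v

/-- The unary function `F_y`: translation by `y` on each `A_α`, identity on each `B_α`. -/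
def Fy (y : G) : MU → MU
  | .a α g => .a α (g + y)
  | .b α η => .b α η

/-- The relation `R = {(η, (α,x)) : α < lh η, x ∈ η(α)}`. -/
def Rmem (u v : MU) : Prop :=
  ∃ (β : Ordinal) (η : Ordinal → Set G) (α : Ordinal) (g : G),
    u = .b β η ∧ v = .a α g ∧ α < β ∧ g ∈ η α

/-- `f` is an automorphism of the restriction of `M` to the set `S`. -/
structure IsAut (S : Set MU) (f : MU → MU) : Prop where
  bij : Set.BijOn f S S
  p1 : ∀ u ∈ S, (isA (f u) ↔ isA u)
  e1 : ∀ u ∈ S, ∀ v ∈ S, (E1 (f u) (f v) ↔ E1 u v)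
  e2 : ∀ u ∈ S, ∀ v ∈ S, (E2 (f u) (f v) ↔ E2 u v)
  fy : ∀ (y : G), ∀ u ∈ S, f (Fy y u) = Fy y (f u)
  r : ∀ u ∈ S, ∀ v ∈ S, (Rmem (f u) (f v) ↔ Rmem u v)

/-- The map `f_ν`: translation by `ν(α)` on `A_α`, coset translation on the `B`-parts. -/
def fnu (ν : Ordinal → G) : MU → MU
  | .a α g => .a α (g + ν α)
  | .b α η => .b α (fun β => (fun z => ν β + z) '' η β)

/-- The support-finiteness condition on `ν : γ → G`:
for every `β < γ` and every `n`, `{α < β : n ∈ supp ν(α)}` is finite. -/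
def SuppFin (γ : Ordinal) (ν : Ordinal → G) : Prop :=
  ∀ β < γ, ∀ n : ℕ, {α : Ordinal | α < β ∧ n ∈ (ν α).support}.Finite

open Ordinal

theorem omega1_eq : omega1.{u} = ω₁ := Cardinal.ord_aleph 1

theorem exists_lt_omega1_forall_lt_of_countable {s : Set Ordinal.{u}} (hs : s.Countable)
    (hlt : ∀ α ∈ s, α < omega1) : ∃ γ < omega1, ∀ α ∈ s, α < γ := by
  have : Countable s := hs.to_subtype
  refine ⟨⨆ α : s, Order.succ α.1, ?_, fun α hα => ?_⟩
  · have hsucc (α : s) : Order.succ α.1 < omega1 :=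
      (Cardinal.isSuccLimit_ord (Cardinal.aleph0_le_aleph 1)).succ_lt (hlt α α.2)
    simp only [omega1_eq] at hsucc ⊢
    exact iSup_lt_omega_one hsucc
  · exact (Order.lt_succ α).trans_le (Ordinal.le_iSup (fun α : s => Order.succ α.1) ⟨α, hα⟩)

theorem finite_of_forall_lt_omega1_finite {p : Ordinal.{u} → Prop}
    (h : ∀ β < omega1, {α | α < β ∧ p α}.Finite) : {α | α < omega1 ∧ p α}.Finite := by
  by_contra hinf
  set e := Set.Infinite.natEmbedding _ hinf
  obtain ⟨γ, hγ, hbound⟩ := exists_lt_omega1_forall_lt_of_countable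
    (Set.countable_range fun i => (e i).1) (by rintro _ ⟨i, rfl⟩; exact (e i).2.1)
  refine Set.infinite_of_injective_forall_mem (f := fun i => (e i).1)
    (fun i j hij => e.injective (Subtype.ext hij)) (fun i => ?_) (h γ hγ)
  exact ⟨hbound _ ⟨i, rfl⟩, (e i).2.2⟩

theorem mem_G0_iff {n : ℕ} {z : G} : z ∈ G0 n ↔ z n = 0 := by
  have hspan : G0 n = Finsupp.supported (ZMod 2) (ZMod 2) {k | k ≠ n} := by
    rw [Finsupp.supported_eq_span_single, G0]
    congr 2
    ext y
    simp [xg, eq_comm]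
  rw [hspan, SetLike.mem_coe, Finsupp.mem_supported']
  simp

theorem Rmem_b_a_iff {β α : Ordinal} {η : Ordinal → Set G} {g : G} :
    Rmem (.b β η) (.a α g) ↔ α < β ∧ g ∈ η α := by
  constructor
  · rintro ⟨_, _, _, _, ⟨⟩, ⟨⟩, hlt, hmem⟩
    exact ⟨hlt, hmem⟩
  · rintro ⟨hlt, hmem⟩
    exact ⟨_, _, _, _, rfl, rfl, hlt, hmem⟩

theorem idx_lt_of_mem_MUuniv {γ : Ordinal} {u : MU} (hu : u ∈ MUuniv γ) : idx u < γ := by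
  cases u with
  | a _ _ => exact hu
  | b _ _ => exact hu.1

namespace IsAut

variable {S : Set MU} {f : MU → MU}

theorem exists_apply_a_eq (hf : IsAut S f) {α : Ordinal} {g : G} (hu : MU.a α g ∈ S) :
    ∃ β c, f (.a α g) = .a β c := by
  have hA : isA (f (.a α g)) := (hf.p1 _ hu).2 trivial
  cases h : f (.a α g) with
  | a β c => exact ⟨β, c, rfl⟩
  | b β η => rw [h] at hA; exact hA.elim

theorem exists_apply_b_eq (hf : IsAut S f) {α : Ordinal} {η : Ordinal → Set G}
    (hu : MU.b α η ∈ S) : ∃ β η', f (.b α η) = .b β η' ∧ MU.b β η' ∈ S := by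
  have hB : ¬ isA (f (.b α η)) := fun h => (hf.p1 _ hu).1 h
  have hmem := hf.bij.mapsTo hu
  cases h : f (.b α η) with
  | a β c => rw [h] at hB; exact (hB trivial).elim
  | b β η' => exact ⟨β, η', rfl, h ▸ hmem⟩

theorem apply_a_eq_Fy (hf : IsAut S f) {α : Ordinal} (h0 : MU.a α 0 ∈ S) (g : G) :
    f (.a α g) = Fy g (f (.a α 0)) := by
  simpa [Fy] using hf.fy g _ h0

theorem idx_apply_a_le_iff (hf : IsAut S f) {α β : Ordinal} {g h : G} (hα : MU.a α g ∈ S)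
    (hβ : MU.a β h ∈ S) : idx (f (.a α g)) ≤ idx (f (.a β h)) ↔ α ≤ β := by
  obtain ⟨α', c, hc⟩ := hf.exists_apply_a_eq hα
  obtain ⟨β', d, hd⟩ := hf.exists_apply_a_eq hβ
  simpa [E1, isA, idx, hc, hd] using hf.e1 _ hα _ hβ

/-- The index map `α ↦ idx (f (a α 0))` is an order automorphism of `γ`, hence the identity. -/
theorem idx_apply_a {γ : Ordinal} (hf : IsAut (MUuniv γ) f) {α : Ordinal} (hα : α < γ) (g : G) :
    idx (f (.a α g)) = α := by
  have hidx (α : Ordinal) (hα : α < γ) (g : G) : idx (f (.a α g)) = idx (f (.a α 0)) :=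
    le_antisymm ((hf.idx_apply_a_le_iff hα hα).2 le_rfl) ((hf.idx_apply_a_le_iff hα hα).2 le_rfl)
  let π : Set.Iio γ → Set.Iio γ := fun α =>
    ⟨idx (f (.a α 0)), idx_lt_of_mem_MUuniv (hf.bij.mapsTo (show MU.a α.1 0 ∈ MUuniv γ from α.2))⟩
  have hmono : StrictMono π := strictMono_of_le_iff_le fun α β =>
    (hf.idx_apply_a_le_iff (g := 0) (h := 0) α.2 β.2).symm
  have hsurj : Function.Surjective π := by
    rintro ⟨β, hβ⟩
    obtain ⟨u, hu, hfu⟩ := hf.bij.surjOn (show MU.a β 0 ∈ MUuniv γ from hβ)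
    cases u with
    | a α g => exact ⟨⟨α, hu⟩, Subtype.ext ((hidx α hu g).symm.trans (by rw [hfu]; rfl))⟩
    | b α η => exact ((hf.p1 _ hu).1 (by rw [hfu]; trivial)).elim
  have hπ : π = id := congrArg DFunLike.coe
    (Subsingleton.elim (hmono.orderIsoOfSurjective π hsurj) (OrderIso.refl _))
  rw [hidx α hα g]
  exact congrArg Subtype.val (congrFun hπ ⟨α, hα⟩)

theorem exists_forall_apply_a_eq_fnu {γ : Ordinal} (hf : IsAut (MUuniv γ) f) :
    ∃ ν : Ordinal → G, ∀ α < γ, ∀ g, f (.a α g) = fnu ν (.a α g) := by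
  have hν (α : Ordinal) : ∃ c : G, α < γ → ∀ g, f (.a α g) = .a α (g + c) := by
    by_cases hα : α < γ
    · obtain ⟨β, c, hc⟩ := hf.exists_apply_a_eq (show MU.a α 0 ∈ MUuniv γ from hα)
      have hβ : β = α := by simpa [hc, idx] using hf.idx_apply_a hα 0
      refine ⟨c, fun _ g => ?_⟩
      rw [hf.apply_a_eq_Fy hα, hc, hβ]
      simp [Fy, add_comm]
    · exact ⟨0, fun h => (hα h).elim⟩
  choose ν hν using hν
  exact ⟨ν, hν⟩

theorem suppFin {γ : Ordinal} (hf : IsAut (MUuniv γ) f) {ν : Ordinal → G}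
    (hν : ∀ α < γ, ∀ g, f (.a α g) = fnu ν (.a α g)) : SuppFin γ ν := by
  intro δ hδ n
  set η : Ordinal → Set G := fun β => if β < δ then G0 n else ∅
  have hη : MU.b δ η ∈ MUuniv γ := by
    refine ⟨hδ, fun β hβ => ?_, fun β hβ => if_neg hβ, n, ?_⟩
    · simp only [η, if_pos hβ]
      exact ⟨n, Or.inl rfl⟩
    · convert Set.finite_empty
      ext β
      simp +contextual [η]
  obtain ⟨δ', η', hfη, -, -, -, m, hm⟩ := hf.exists_apply_b_eq hη
  refine hm.subset fun α ⟨hαδ, hn⟩ => ?_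
  have hα : α < γ := hαδ.trans hδ
  have hR (g : G) : α < δ' ∧ g + ν α ∈ η' α ↔ g n = 0 := by
    have := hf.r _ hη _ (show MU.a α g ∈ MUuniv γ from hα)
    rw [hfη, hν α hα, fnu, Rmem_b_a_iff, Rmem_b_a_iff] at this
    simpa only [η, if_pos hαδ, true_and, hαδ, mem_G0_iff] using this
  obtain ⟨hαδ', -⟩ := (hR 0).2 rfl
  refine ⟨hαδ', fun hG => Finsupp.mem_support_iff.1 hn ?_⟩
  -- translating back by `ν α` would move `0 ∈ G⁰ₘ = η' α` to `ν α ∈ G⁰ₙ`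
  refine (hR (ν α)).1 ⟨hαδ', ?_⟩
  rw [hG, mem_G0_iff]
  simp [CharTwo.add_self_eq_zero]

end IsAut

theorem SuppFin.exists_forall_eq_zero {ν : Ordinal → G} (hν : SuppFin omega1 ν) :
    ∃ γ < omega1, ∀ α, γ ≤ α → α < omega1 → ν α = 0 := by
  have hfin (n : ℕ) : {α | α < omega1 ∧ n ∈ (ν α).support}.Finite :=
    finite_of_forall_lt_omega1_finite fun β hβ => hν β hβ n
  obtain ⟨γ, hγ, hbound⟩ := exists_lt_omega1_forall_lt_of_countable
    (Set.countable_iUnion fun n => (hfin n).countable)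
    (by simp only [Set.mem_iUnion]; rintro α ⟨n, hα, -⟩; exact hα)
  refine ⟨γ, hγ, fun α hγα hα => ?_⟩
  by_contra hne
  obtain ⟨n, hn⟩ := Finsupp.support_nonempty_iff.2 hne
  exact (hbound α (Set.mem_iUnion.2 ⟨n, hα, hn⟩)).not_ge hγα

/-- For every automorphism `f` of `M` there exists `γ* < ω₁` such
that `f` restricted to `A_α` is the identity for all `α ∈ [γ*, ω₁)`. -/
theorem stmt9 (f : MU → MU) (hf : IsAut (MUuniv omega1) f) :
    ∃ γ < omega1, ∀ α, γ ≤ α → α < omega1 → ∀ g : G, f (.a α g) = .a α g := by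
  obtain ⟨ν, hν⟩ := hf.exists_forall_apply_a_eq_fnu
  obtain ⟨γ, hγ, hzero⟩ := (hf.suppFin hν).exists_forall_eq_zero
  refine ⟨γ, hγ, fun α hγα hα g => ?_⟩
  rw [hν α hα g, fnu, hzero α hγα hα, add_zero]
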